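/- Let y = (y_1,…,y_n) with all y_i, y_i ± y_j avoiding the singularities of the relevant trigonometric functions, and let V(y) = −∑_i [C_b ln|sin(y_i/2)| + C_a ln|cos(y_i/2)|] − 2β ∑_{i>j} [ln|sin((y_i−y_j)/2)| + ln|sin((y_i+y_j)/2)|] with C_a, C_b ≥ 0 and β ≥ 0. Then for every v ∈ ℝⁿ, vᵀ(Hess V(y))v ≥ ((C_a + C_b)/4)·|v|². In particular Hess V(y) ⪰ ((C_a+C_b)/4)·Id. -/

import Mathlib

/-!
Write `H = diag(d) + Q`, where `d i = C_b / (4 sin² y_i) + C_a / (4 cos² y_i)` and `Q` collects the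
`β`-terms. Since `1/sin² ≥ 1` and `1/cos² ≥ 1`, each `d i ≥ (C_a + C_b)/4`. The matrix `Q` is the
signless Laplacian of the symmetric nonnegative weights `W i j = (β/2)(1/sin²(y_i+y_j) + 1/sin²(y_i−y_j))`
(`i ≠ j`), so `vᵀ Q v = ½ ∑_{i,j} W i j (v_i + v_j)² ≥ 0`.
-/

open Finset Matrix

section SignlessLaplacian

variable {ι : Type*} [Fintype ι]

theorem two_mul_signless_quadForm_eq (W : Matrix ι ι ℝ) (hW : W.IsSymm) (v : ι → ℝ) :
    2 * (∑ i, (∑ j, W i j) * v i ^ 2 + v ⬝ᵥ W *ᵥ v)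
      = ∑ i, ∑ j, W i j * (v i + v j) ^ 2 := by
  have hswap : ∑ i, ∑ j, W i j * v j ^ 2 = ∑ i, ∑ j, W i j * v i ^ 2 := by
    rw [sum_comm]
    exact sum_congr rfl fun i _ => sum_congr rfl fun j _ => by rw [hW.apply]
  have hexpand : ∑ i, ∑ j, W i j * (v i + v j) ^ 2
      = ∑ i, ∑ j, W i j * v i ^ 2 + ∑ i, ∑ j, W i j * v j ^ 2
        + 2 * ∑ i, ∑ j, v i * (W i j * v j) := by
    simp only [mul_sum, ← sum_add_distrib]
    exact sum_congr rfl fun i _ => sum_congr rfl fun j _ => by ring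
  have hrow : ∑ i, (∑ j, W i j) * v i ^ 2 = ∑ i, ∑ j, W i j * v i ^ 2 := by
    simp only [sum_mul]
  have hdot : v ⬝ᵥ W *ᵥ v = ∑ i, ∑ j, v i * (W i j * v j) := by
    simp only [dotProduct, mulVec, mul_sum]
  rw [hexpand, hswap, hrow, hdot]
  ring

theorem signless_quadForm_nonneg (W : Matrix ι ι ℝ) (hW_nonneg : ∀ i j, 0 ≤ W i j)
    (hW : W.IsSymm) (v : ι → ℝ) :
    0 ≤ ∑ i, (∑ j, W i j) * v i ^ 2 + v ⬝ᵥ W *ᵥ v := by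
  have h := two_mul_signless_quadForm_eq W hW v
  have : 0 ≤ ∑ i, ∑ j, W i j * (v i + v j) ^ 2 :=
    sum_nonneg fun i _ => sum_nonneg fun j _ => mul_nonneg (hW_nonneg i j) (sq_nonneg _)
  linarith

variable [DecidableEq ι]

theorem sum_mul_sq_le_dotProduct_mulVec (H : Matrix ι ι ℝ) (d : ι → ℝ) (hH : H.IsSymm)
    (hoff : ∀ i j, i ≠ j → 0 ≤ H i j)
    (hdiag : ∀ i, H i i = d i + ∑ k ∈ univ.filter (fun k => k ≠ i), H i k) (v : ι → ℝ) :
    ∑ i, d i * v i ^ 2 ≤ v ⬝ᵥ H *ᵥ v := by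
  obtain ⟨W, hW⟩ : ∃ W : Matrix ι ι ℝ, ∀ i j, W i j = if i = j then 0 else H i j :=
    ⟨of fun i j => if i = j then 0 else H i j, fun _ _ => rfl⟩
  have hrow : ∀ i, ∑ j, W i j = ∑ k ∈ univ.filter (fun k => k ≠ i), H i k := fun i => by
    rw [sum_filter]
    exact sum_congr rfl fun k _ => by simp only [hW, ite_not, eq_comm]
  have hsplit : H = diagonal d + diagonal (fun i => ∑ j, W i j) + W := by
    ext i j
    rcases eq_or_ne i j with rfl | hij
    · rw [Matrix.add_apply, Matrix.add_apply, diagonal_apply_eq, diagonal_apply_eq, hrow, hW,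
        if_pos rfl, add_zero, hdiag]
    · rw [Matrix.add_apply, Matrix.add_apply, diagonal_apply_ne _ hij, diagonal_apply_ne _ hij,
        hW, if_neg hij, zero_add, zero_add]
  have hW_nonneg : ∀ i j, 0 ≤ W i j := fun i j => by
    rw [hW]
    split_ifs with hij
    exacts [le_rfl, hoff i j hij]
  have hW_symm : W.IsSymm := IsSymm.ext fun i j => by
    simp only [hW, eq_comm (a := j), hH.apply i j]
  have hquad := signless_quadForm_nonneg W hW_nonneg hW_symm v
  have hdiag_quad : ∀ e : ι → ℝ, v ⬝ᵥ diagonal e *ᵥ v = ∑ i, e i * v i ^ 2 := fun e =>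
    sum_congr rfl fun i _ => by rw [mulVec_diagonal]; ring
  rw [hsplit, add_mulVec, add_mulVec, dotProduct_add, dotProduct_add, hdiag_quad, hdiag_quad]
  linarith

end SignlessLaplacian

open Real in
theorem add_div_four_le_div_sin_sq_add_div_cos_sq {Ca Cb : ℝ} (hCa : 0 ≤ Ca) (hCb : 0 ≤ Cb)
    {x : ℝ} (hs : sin x ≠ 0) (hc : cos x ≠ 0) :
    (Ca + Cb) / 4 ≤ Cb / (4 * sin x ^ 2) + Ca / (4 * cos x ^ 2) := by
  have hb : Cb / 4 ≤ Cb / (4 * sin x ^ 2) :=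
    div_le_div_of_nonneg_left hCb (by positivity) (by nlinarith [sin_sq_le_one x])
  have ha : Ca / 4 ≤ Ca / (4 * cos x ^ 2) :=
    div_le_div_of_nonneg_left hCa (by positivity) (by nlinarith [cos_sq_le_one x])
  linarith

open Real in
theorem hessian_potential_lower_bound_general (n : ℕ) (β Ca Cb : ℝ)
    (hβ : 0 ≤ β) (hCa : 0 ≤ Ca) (hCb : 0 ≤ Cb) (y : Fin n → ℝ)
    (hs : ∀ i, sin (y i) ≠ 0) (hc : ∀ i, cos (y i) ≠ 0)
    (H : Matrix (Fin n) (Fin n) ℝ)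
    (hdiag : ∀ i, H i i = Cb / (4 * sin (y i) ^ 2) + Ca / (4 * cos (y i) ^ 2)
        + (β / 2) * ∑ k ∈ Finset.univ.filter (fun k => k ≠ i),
            (1 / sin (y i + y k) ^ 2 + 1 / sin (y i - y k) ^ 2))
    (hoff : ∀ i j, i ≠ j →
      H i j = (β / 2) * (1 / sin (y i + y j) ^ 2 + 1 / sin (y i - y j) ^ 2)) :
    ∀ v : Fin n → ℝ,
      ((Ca + Cb) / 4) * ∑ i, v i ^ 2 ≤ dotProduct v (H.mulVec v) := by
  intro v
  have hsymm : H.IsSymm := IsSymm.ext fun i j => by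
    rcases eq_or_ne j i with rfl | hji
    · rfl
    · rw [hoff j i hji, hoff i j hji.symm, add_comm (y j), ← neg_sub (y i), sin_neg, neg_sq]
  have hoff_nonneg : ∀ i j, i ≠ j → 0 ≤ H i j := fun i j hij => by
    rw [hoff i j hij]; positivity
  have hdiag' : ∀ i, H i i = (Cb / (4 * sin (y i) ^ 2) + Ca / (4 * cos (y i) ^ 2))
      + ∑ k ∈ univ.filter (fun k => k ≠ i), H i k := fun i => by
    rw [hdiag i, mul_sum]
    congr 1
    exact sum_congr rfl fun k hk => (hoff i k (mem_filter.1 hk).2.symm).symm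
  calc (Ca + Cb) / 4 * ∑ i, v i ^ 2
      ≤ ∑ i, (Cb / (4 * sin (y i) ^ 2) + Ca / (4 * cos (y i) ^ 2)) * v i ^ 2 := by
        rw [mul_sum]
        exact sum_le_sum fun i _ => mul_le_mul_of_nonneg_right
          (add_div_four_le_div_sin_sq_add_div_cos_sq hCa hCb (hs i) (hc i)) (sq_nonneg _)
    _ ≤ v ⬝ᵥ H *ᵥ v := sum_mul_sq_le_dotProduct_mulVec H _ hsymm hoff_nonneg hdiag' v

open Real in
/-- The Hessian of the EDJ potential (given by its explicit entries) dominates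
((C_a + C_b)/4)·Id as a quadratic form. -/
theorem hessian_potential_lower_bound (n : ℕ) (β Ca Cb : ℝ)
    (hβ : 0 ≤ β) (hCa : 0 ≤ Ca) (hCb : 0 ≤ Cb) (y : Fin n → ℝ)
    (hs : ∀ i, sin (y i) ≠ 0) (hc : ∀ i, cos (y i) ≠ 0)
    (hp : ∀ i j, i ≠ j → sin (y i + y j) ≠ 0)
    (hm : ∀ i j, i ≠ j → sin (y i - y j) ≠ 0)
    (H : Matrix (Fin n) (Fin n) ℝ)
    (hdiag : ∀ i, H i i = Cb / (4 * sin (y i) ^ 2) + Ca / (4 * cos (y i) ^ 2)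
        + (β / 2) * ∑ k ∈ Finset.univ.filter (fun k => k ≠ i),
            (1 / sin (y i + y k) ^ 2 + 1 / sin (y i - y k) ^ 2))
    (hoff : ∀ i j, i ≠ j →
      H i j = (β / 2) * (1 / sin (y i + y j) ^ 2 + 1 / sin (y i - y j) ^ 2)) :
    ∀ v : Fin n → ℝ,
      ((Ca + Cb) / 4) * ∑ i, v i ^ 2 ≤ dotProduct v (H.mulVec v) :=
  hessian_potential_lower_bound_general n β Ca Cb hβ hCa hCb y hs hc H hdiag hoff
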